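/- For fractional Brownian motion B with H = 1/4 and each n ≥ 1, k ∈ {0,...,n-1}, one has |⟨ε_{k/n}, δ_{k/n}⟩² - 1/(4n)| ≤ (√(k+1) - √k)/(2n), where ⟨ε_{k/n}, δ_{k/n}⟩ = E(B_{k/n}(B_{(k+1)/n} - B_{k/n})). Consequently Σ_{k=0}^{n-1} |⟨ε_{k/n}, δ_{k/n}⟩² - 1/(4n)| → 0 as n → ∞. -/

import Mathlib

open MeasureTheory Filter

/-!
Subtracting the covariances at `(k/n, (k+1)/n)` and `(k/n, k/n)` gives
`⟨ε_{k/n}, δ_{k/n}⟩ = (d_k - 1)/(2√n)` with `d_k = √(k+1) - √k ∈ [0, 1]`, so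
`⟨ε_{k/n}, δ_{k/n}⟩² - 1/(4n) = d_k (d_k - 2)/(4n)`, which is at most `d_k/(2n)` in absolute
value. The bounds telescope to `√n/(2n) = 1/(2√n) → 0`.
-/

namespace Real

lemma sqrt_add_one_sub_sqrt_nonneg (x : ℝ) : 0 ≤ √(x + 1) - √x :=
  sub_nonneg.2 (sqrt_le_sqrt (by linarith))

lemma sqrt_add_one_sub_sqrt_le_one {x : ℝ} (hx : 0 ≤ x) : √(x + 1) - √x ≤ 1 := by
  have h : √(x + 1) ≤ √x + 1 := by
    rw [sqrt_le_left (by positivity), add_sq, sq_sqrt hx]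
    nlinarith [sqrt_nonneg x]
  linarith

lemma sum_range_sqrt_succ_sub_sqrt (n : ℕ) :
    ∑ k ∈ Finset.range n, (√((k : ℝ) + 1) - √(k : ℝ)) = √(n : ℝ) := by
  simpa using Finset.sum_range_sub (fun k : ℕ => √(k : ℝ)) n

end Real

lemma abs_sq_sub_one_div_sq_sub_le {d c : ℝ} (hc : 0 < c) (hd₀ : 0 ≤ d) (hd₁ : d ≤ 1) :
    |((d - 1) / (2 * c)) ^ 2 - 1 / (4 * c ^ 2)| ≤ d / (2 * c ^ 2) := by
  have h : ((d - 1) / (2 * c)) ^ 2 - 1 / (4 * c ^ 2) = d * (d - 2) / (4 * c ^ 2) := by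
    field_simp; ring
  rw [h, abs_div, abs_of_pos (by positivity : (0:ℝ) < 4 * c ^ 2)]
  calc |d * (d - 2)| / (4 * c ^ 2) ≤ 2 * d / (4 * c ^ 2) := by
        gcongr
        exact abs_le.2 ⟨by nlinarith, by nlinarith⟩
    _ = d / (2 * c ^ 2) := by field_simp; ring

section Increment

variable {Ω : Type*} [MeasurableSpace Ω] {μ : Measure Ω} {B : ℝ → Ω → ℝ}

lemma integral_mul_increment_eq
    (hcov : ∀ s t : ℝ, s ∈ Set.Icc (0:ℝ) 1 → t ∈ Set.Icc (0:ℝ) 1 →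
      ∫ ω, B s ω * B t ω ∂μ = (1/2) * (Real.sqrt t + Real.sqrt s - Real.sqrt |t - s|))
    (hint : ∀ s t : ℝ, Integrable (fun ω => B s ω * B t ω) μ)
    {s t : ℝ} (hs : s ∈ Set.Icc (0:ℝ) 1) (ht : t ∈ Set.Icc (0:ℝ) 1) (hst : s ≤ t) :
    ∫ ω, B s ω * (B t ω - B s ω) ∂μ = (√t - √s - √(t - s)) / 2 := by
  simp_rw [mul_sub]
  rw [integral_sub (hint s t) (hint s s), hcov s t hs ht, hcov s s hs hs, sub_self, abs_zero,
    Real.sqrt_zero, abs_of_nonneg (sub_nonneg.2 hst)]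
  ring

lemma integral_mul_increment_grid_eq
    (hcov : ∀ s t : ℝ, s ∈ Set.Icc (0:ℝ) 1 → t ∈ Set.Icc (0:ℝ) 1 →
      ∫ ω, B s ω * B t ω ∂μ = (1/2) * (Real.sqrt t + Real.sqrt s - Real.sqrt |t - s|))
    (hint : ∀ s t : ℝ, Integrable (fun ω => B s ω * B t ω) μ)
    {n k : ℕ} (hkn : k < n) :
    ∫ ω, B ((k:ℝ)/n) ω * (B (((k:ℝ)+1)/n) ω - B ((k:ℝ)/n) ω) ∂μ
      = (√((k:ℝ) + 1) - √(k:ℝ) - 1) / (2 * √(n:ℝ)) := by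
  have hn : (0:ℝ) < n := by exact_mod_cast (k.zero_le.trans_lt hkn)
  have hkn' : (k:ℝ) + 1 ≤ n := by exact_mod_cast hkn
  have mem_Icc {x : ℝ} (hx₀ : 0 ≤ x) (hx : x ≤ n) : x / n ∈ Set.Icc (0:ℝ) 1 :=
    ⟨by positivity, (div_le_one hn).2 hx⟩
  rw [integral_mul_increment_eq hcov hint (mem_Icc (by positivity) (by linarith))
    (mem_Icc (by positivity) hkn') (by gcongr; linarith), ← sub_div, add_sub_cancel_left,
    Real.sqrt_div' _ hn.le, Real.sqrt_div' _ hn.le, Real.sqrt_div' _ hn.le, Real.sqrt_one]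
  have : √(n:ℝ) ≠ 0 := (Real.sqrt_pos.2 hn).ne'
  field_simp

end Increment

theorem stmt_5_general {Ω : Type*} [MeasurableSpace Ω] (μ : Measure Ω)
    (B : ℝ → Ω → ℝ)
    (hcov : ∀ s t : ℝ, s ∈ Set.Icc (0:ℝ) 1 → t ∈ Set.Icc (0:ℝ) 1 →
      ∫ ω, B s ω * B t ω ∂μ
        = (1/2) * (Real.sqrt t + Real.sqrt s - Real.sqrt |t - s|))
    (hint : ∀ s t : ℝ, Integrable (fun ω => B s ω * B t ω) μ) :
    (∀ n k : ℕ, 1 ≤ n → k < n →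
      |(∫ ω, B ((k:ℝ)/n) ω * (B (((k:ℝ)+1)/n) ω - B ((k:ℝ)/n) ω) ∂μ)^2 - 1/(4*n)|
        ≤ (Real.sqrt ((k:ℝ)+1) - Real.sqrt (k:ℝ))/(2*n)) ∧
    Tendsto (fun n : ℕ => ∑ k ∈ Finset.range n,
        |(∫ ω, B ((k:ℝ)/n) ω * (B (((k:ℝ)+1)/n) ω - B ((k:ℝ)/n) ω) ∂μ)^2 - 1/(4*n)|)
      atTop (nhds 0) := by
  have bound : ∀ n k : ℕ, 1 ≤ n → k < n →
      |(∫ ω, B ((k:ℝ)/n) ω * (B (((k:ℝ)+1)/n) ω - B ((k:ℝ)/n) ω) ∂μ)^2 - 1/(4*n)|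
        ≤ (Real.sqrt ((k:ℝ)+1) - Real.sqrt (k:ℝ))/(2*n) := by
    intro n k hn hkn
    have hsq : √(n:ℝ) ^ 2 = n := Real.sq_sqrt n.cast_nonneg
    rw [integral_mul_increment_grid_eq hcov hint hkn]
    simpa only [hsq] using abs_sq_sub_one_div_sq_sub_le (Real.sqrt_pos.2 (Nat.cast_pos.2 hn))
      (Real.sqrt_add_one_sub_sqrt_nonneg _) (Real.sqrt_add_one_sub_sqrt_le_one k.cast_nonneg)
  refine ⟨bound, squeeze_zero (g := fun n : ℕ => (√(n:ℝ))⁻¹ / 2)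
    (fun n => Finset.sum_nonneg fun _ _ => abs_nonneg _) (fun n => ?_) ?_⟩
  · calc _ ≤ ∑ k ∈ Finset.range n, (√((k:ℝ) + 1) - √(k:ℝ)) / (2 * n) :=
          Finset.sum_le_sum fun k hk =>
            bound n k (Nat.zero_lt_of_lt (Finset.mem_range.1 hk)) (Finset.mem_range.1 hk)
      _ = √(n:ℝ) / (2 * n) := by rw [← Finset.sum_div, Real.sum_range_sqrt_succ_sub_sqrt]
      _ = (√(n:ℝ))⁻¹ / 2 := by rw [mul_comm, ← div_div, Real.sqrt_div_self]
  · simpa using (Real.tendsto_sqrt_atTop.comp tendsto_natCast_atTop_atTop).inv_tendsto_atTop.div_const 2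

/-- Bound `|⟨ε_{k/n}, δ_{k/n}⟩² - 1/(4n)| ≤ (√(k+1) - √k)/(2n)` and the resulting
convergence `Σ_{k=0}^{n-1} |⟨ε_{k/n}, δ_{k/n}⟩² - 1/(4n)| → 0`, for fBm with `H = 1/4`. -/
theorem stmt_5 {Ω : Type*} [MeasurableSpace Ω] (μ : Measure Ω) [IsProbabilityMeasure μ]
    (B : ℝ → Ω → ℝ)
    (hcov : ∀ s t : ℝ, s ∈ Set.Icc (0:ℝ) 1 → t ∈ Set.Icc (0:ℝ) 1 →
      ∫ ω, B s ω * B t ω ∂μ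
        = (1/2) * (Real.sqrt t + Real.sqrt s - Real.sqrt |t - s|))
    (hint : ∀ s t : ℝ, Integrable (fun ω => B s ω * B t ω) μ) :
    (∀ n k : ℕ, 1 ≤ n → k < n →
      |(∫ ω, B ((k:ℝ)/n) ω * (B (((k:ℝ)+1)/n) ω - B ((k:ℝ)/n) ω) ∂μ)^2 - 1/(4*n)|
        ≤ (Real.sqrt ((k:ℝ)+1) - Real.sqrt (k:ℝ))/(2*n)) ∧
    Tendsto (fun n : ℕ => ∑ k ∈ Finset.range n,
        |(∫ ω, B ((k:ℝ)/n) ω * (B (((k:ℝ)+1)/n) ω - B ((k:ℝ)/n) ω) ∂μ)^2 - 1/(4*n)|)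
      atTop (nhds 0) :=
  stmt_5_general μ B hcov hint
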